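/- Let μ be a finite Borel measure on ℝⁿ with compact support and suppose the spherical average σ(μ)(r) = ∫_{S^{n−1}} |μ̂(rv)|² dσ^{n−1}(v) satisfies σ(μ)(r) ≤ C r^{−β} for all r > 1, where β > 0. Let ν be a finite Borel measure on ℝⁿ supported in the unit ball with ν(B(x,ρ)) ≤ ρ^s for all x, ρ, where s > n − β. Then ∫_{ℝⁿ} σ(μ)(|ξ|) |ν̂(ξ)|² dξ < ∞. -/

import Mathlib

open MeasureTheory Metric Filter
open scoped ENNReal Topology

/-- The Fourier transform of a finite Borel measure `μ` on `ℝⁿ`. -/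
noncomputable def fourierOfMeasure {n : ℕ} (μ : Measure (EuclideanSpace ℝ (Fin n)))
    (ξ : EuclideanSpace ℝ (Fin n)) : ℂ :=
  ∫ z, Complex.exp (-2 * Real.pi * Complex.I * ((inner ℝ ξ z : ℝ) : ℂ)) ∂μ

/-- The spherical average `σ(μ)(r) = ∫_{S^{n−1}} |μ̂(rv)|² dσ^{n−1}(v)`, where the surface
measure on the unit sphere is the one induced by Lebesgue measure. -/
noncomputable def sphAvg {n : ℕ} (μ : Measure (EuclideanSpace ℝ (Fin n))) (r : ℝ) : ℝ≥0∞ :=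
  ∫⁻ v : sphere (0 : EuclideanSpace ℝ (Fin n)) 1,
    (‖fourierOfMeasure μ (r • (v : EuclideanSpace ℝ (Fin n)))‖₊ : ℝ≥0∞) ^ 2
    ∂(volume : Measure (EuclideanSpace ℝ (Fin n))).toSphere

/-!
Writing `|ν̂|²` as the Fourier transform of `ν ⊗ ν` pushed forward by `(x, y) ↦ x - y` and
integrating it against the Gaussian `exp (-π |ξ|² / R²)`, whose Fourier transform is
`Rⁿ exp (-π R² |w|²)`, gives `∫_{|ξ| ≤ R} |ν̂|² ≲ Rⁿ ∫∫ exp (-π R² |x - y|²) dν dν ≲ R^{n-s}`;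
the last step applies the Frostman bound `ν(B(x, ρ)) ≤ ρ^s` on the shells
`k / R ≤ |x - y| ≤ (k + 1) / R`. On the dyadic shells `2^j < |ξ| ≤ 2^{j+1}` we have
`σ(μ)(|ξ|) ≲ 2^{-jβ}`, so their contributions form a geometric series of ratio
`2^{n-s-β} < 1`, while on the unit ball `σ(μ) ≤ |S^{n-1}| μ(ℝⁿ)²`.
-/

open Real Complex
open scoped RealInnerProductSpace FourierTransform ComplexConjugate

lemma integrable_exp_neg_mul_sq_norm {V : Type*} [NormedAddCommGroup V] [InnerProductSpace ℝ V]
    [FiniteDimensional ℝ V] [MeasurableSpace V] [BorelSpace V] {a : ℝ} (ha : 0 < a) :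
    Integrable fun v : V ↦ rexp (-a * ‖v‖ ^ 2) := by
  simpa [Complex.norm_exp, ← ofReal_pow] using (GaussianFourier.integrable_cexp_neg_mul_sq_norm_add
    (b := a) (by simpa using ha) 0 (0 : V)).norm

/-- In `lintegral_gaussian_dist_le`, the `k`-th term bounds the contribution of the shell
`k / R ≤ dist x y ≤ (k + 1) / R`, where the Gaussian is at most `exp (-π k²)` and `ν` has mass at
most `((k + 1) / R) ^ s`. -/
noncomputable def gaussianShellSum (s : ℝ) : ℝ≥0∞ :=
  ∑' k : ℕ, ENNReal.ofReal (rexp (-(π * k ^ 2)) * (k + 1) ^ s)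

lemma summable_exp_neg_pi_mul_sq_mul_rpow (s : ℝ) :
    Summable fun k : ℕ ↦ rexp (-(π * k ^ 2)) * (k + 1) ^ s := by
  have hsum :
      Summable fun k : ℕ ↦ rexp 1 * (((k + 1 : ℕ) : ℝ) ^ ⌈s⌉₊ * rexp (-1 * (k + 1 : ℕ))) :=
    ((summable_nat_add_iff 1).2
      (Real.summable_pow_mul_exp_neg_nat_mul ⌈s⌉₊ one_pos)).mul_left _
  refine hsum.of_nonneg_of_le (fun k ↦ by positivity) fun k ↦ ?_
  have hk : (1 : ℝ) ≤ k + 1 := by simp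
  have hexp : rexp (-(π * k ^ 2)) ≤ rexp 1 * rexp (-1 * (k + 1 : ℕ)) := by
    rw [← Real.exp_add, Real.exp_le_exp]
    push_cast
    have hk2 : (k : ℝ) ≤ k ^ 2 := by exact_mod_cast Nat.le_self_pow two_ne_zero k
    nlinarith [Real.pi_gt_three]
  have hpow : ((k : ℝ) + 1) ^ s ≤ ((k + 1 : ℕ) : ℝ) ^ ⌈s⌉₊ := by
    rw [← Real.rpow_natCast]
    push_cast
    exact Real.rpow_le_rpow_of_exponent_le hk (Nat.le_ceil s)
  calc rexp (-(π * k ^ 2)) * (k + 1) ^ s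
      ≤ rexp 1 * rexp (-1 * (k + 1 : ℕ)) * ((k + 1 : ℕ) : ℝ) ^ ⌈s⌉₊ :=
        mul_le_mul hexp hpow (by positivity) (by positivity)
    _ = _ := by ring

lemma gaussianShellSum_ne_top (s : ℝ) : gaussianShellSum s ≠ ⊤ := by
  rw [gaussianShellSum, ← ENNReal.ofReal_tsum_of_nonneg (fun k ↦ by positivity)
    (summable_exp_neg_pi_mul_sq_mul_rpow s)]
  exact ENNReal.ofReal_ne_top

lemma lintegral_gaussian_dist_le {X : Type*} [PseudoMetricSpace X] [MeasurableSpace X]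
    (ν : Measure X) {s : ℝ}
    (hν : ∀ (x : X) (ρ : ℝ), 0 < ρ → ν (closedBall x ρ) ≤ ENNReal.ofReal (ρ ^ s))
    {R : ℝ} (hR : 0 < R) (x : X) :
    ∫⁻ y, ENNReal.ofReal (rexp (-(π * R ^ 2) * dist x y ^ 2)) ∂ν ≤
      ENNReal.ofReal (R ^ (-s)) * gaussianShellSum s := by
  let shell (k : ℕ) : Set X := closedBall x ((k + 1) / R) \ ball x (k / R)
  have hcover : Set.univ ⊆ ⋃ k, shell k := fun y _ ↦ by
    refine Set.mem_iUnion.2 ⟨⌊dist y x * R⌋₊, ?_, ?_⟩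
    · rw [mem_closedBall, le_div_iff₀ hR]
      exact (Nat.lt_floor_add_one _).le
    · rw [mem_ball, not_lt, div_le_iff₀ hR]
      exact Nat.floor_le (by positivity)
  have hshell (k : ℕ) :
      ∫⁻ y in shell k, ENNReal.ofReal (rexp (-(π * R ^ 2) * dist x y ^ 2)) ∂ν ≤
        ENNReal.ofReal (R ^ (-s)) * ENNReal.ofReal (rexp (-(π * k ^ 2)) * (k + 1) ^ s) := by
    have hexp : ∀ y ∈ shell k, ENNReal.ofReal (rexp (-(π * R ^ 2) * dist x y ^ 2)) ≤
        ENNReal.ofReal (rexp (-(π * k ^ 2))) := fun y hy ↦ by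
      have hky : k / R ≤ dist x y := by simpa [dist_comm] using hy.2
      have : π * k ^ 2 ≤ π * R ^ 2 * dist x y ^ 2 := by
        rw [div_le_iff₀ hR] at hky
        have := pow_le_pow_left₀ (by positivity) hky 2
        nlinarith [Real.pi_pos]
      gcongr
      linarith
    calc ∫⁻ y in shell k, ENNReal.ofReal (rexp (-(π * R ^ 2) * dist x y ^ 2)) ∂ν
        ≤ ∫⁻ _ in shell k, ENNReal.ofReal (rexp (-(π * k ^ 2))) ∂ν :=
          setLIntegral_mono measurable_const hexp
      _ = ENNReal.ofReal (rexp (-(π * k ^ 2))) * ν (shell k) := setLIntegral_const _ _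
      _ ≤ ENNReal.ofReal (rexp (-(π * k ^ 2))) * ENNReal.ofReal (((k + 1) / R) ^ s) := by
          gcongr
          exact (measure_mono Set.sdiff_subset).trans (hν x _ (by positivity))
      _ = _ := by
          rw [← ENNReal.ofReal_mul (by positivity), ← ENNReal.ofReal_mul (by positivity),
            Real.div_rpow (by positivity) hR.le, Real.rpow_neg hR.le]
          ring_nf
  calc ∫⁻ y, ENNReal.ofReal (rexp (-(π * R ^ 2) * dist x y ^ 2)) ∂ν
      ≤ ∫⁻ y in ⋃ k, shell k, ENNReal.ofReal (rexp (-(π * R ^ 2) * dist x y ^ 2)) ∂ν := by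
        rw [← setLIntegral_univ]
        exact lintegral_mono_set hcover
    _ ≤ ∑' k, ∫⁻ y in shell k, ENNReal.ofReal (rexp (-(π * R ^ 2) * dist x y ^ 2)) ∂ν :=
        lintegral_iUnion_le _ _
    _ ≤ _ := by
        rw [gaussianShellSum, ← ENNReal.tsum_mul_left]
        exact ENNReal.tsum_le_tsum hshell

lemma setLIntegral_closedBall_le_lintegral_gaussian_mul {V : Type*} [SeminormedAddCommGroup V]
    [MeasurableSpace V] [OpensMeasurableSpace V] (μ : Measure V) (f : V → ℝ≥0∞) {R : ℝ}
    (hR : 0 < R) :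
    ∫⁻ ξ in closedBall 0 R, f ξ ∂μ ≤
      ENNReal.ofReal (rexp π) * ∫⁻ ξ, ENNReal.ofReal (rexp (-(π / R ^ 2) * ‖ξ‖ ^ 2)) * f ξ ∂μ := by
  have hweight (ξ : V) (hξ : ξ ∈ closedBall 0 R) :
      1 ≤ ENNReal.ofReal (rexp π) * ENNReal.ofReal (rexp (-(π / R ^ 2) * ‖ξ‖ ^ 2)) := by
    rw [← ENNReal.ofReal_mul (exp_pos _).le, ← Real.exp_add, ENNReal.one_le_ofReal,
      Real.one_le_exp_iff, neg_mul, ← sub_eq_add_neg, sub_nonneg, div_mul_eq_mul_div,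
      div_le_iff₀ (by positivity)]
    have : ‖ξ‖ ^ 2 ≤ R ^ 2 := pow_le_pow_left₀ (norm_nonneg ξ) (mem_closedBall_zero_iff.1 hξ) 2
    nlinarith [Real.pi_pos]
  calc ∫⁻ ξ in closedBall 0 R, f ξ ∂μ
      ≤ ∫⁻ ξ in closedBall 0 R, ENNReal.ofReal (rexp π) *
          (ENNReal.ofReal (rexp (-(π / R ^ 2) * ‖ξ‖ ^ 2)) * f ξ) ∂μ :=
        setLIntegral_mono' measurableSet_closedBall fun ξ hξ ↦ by
          rw [← mul_assoc]
          exact le_mul_of_one_le_left' (hweight ξ hξ)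
    _ ≤ _ := by
        rw [lintegral_const_mul' _ _ ENNReal.ofReal_ne_top]
        exact mul_le_mul_right (setLIntegral_le_lintegral _ _) _

lemma exists_two_pow_lt_le {x : ℝ} (hx : 1 < x) : ∃ j : ℕ, 2 ^ j < x ∧ x ≤ 2 ^ (j + 1) := by
  obtain ⟨m, hm⟩ := exists_mem_Ioc_zpow (zero_lt_one.trans hx) one_lt_two
  have hm0 : 0 ≤ m := by
    by_contra! h
    have : (2 : ℝ) ^ (m + 1) ≤ 1 := zpow_le_one_of_nonpos₀ one_le_two (by omega)
    linarith [hm.2]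
  lift m to ℕ using hm0
  exact ⟨m, by exact_mod_cast hm⟩

lemma two_pow_rpow_neg_mul_two_pow_succ_rpow (β γ : ℝ) (j : ℕ) :
    ((2 : ℝ) ^ j) ^ (-β) * ((2 : ℝ) ^ (j + 1)) ^ γ = 2 ^ γ * ((2 : ℝ) ^ (γ - β)) ^ j := by
  simp only [← Real.rpow_natCast, ← Real.rpow_mul zero_le_two, ← Real.rpow_add zero_lt_two]
  congr 1
  push_cast
  ring

lemma setLIntegral_dyadicShell_mul_le {E : Type*} [SeminormedAddCommGroup E]
    [MeasurableSpace E] [OpensMeasurableSpace E] (μ : Measure E) {f g : E → ℝ≥0∞}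
    {β γ : ℝ} {c C : ℝ≥0∞} (hβ : 0 < β) (hC : C ≠ ⊤)
    (hf : ∀ R : ℝ, 1 ≤ R → ∫⁻ ξ in closedBall 0 R, f ξ ∂μ ≤ c * ENNReal.ofReal (R ^ γ))
    (hg : ∀ ξ, 1 < ‖ξ‖ → g ξ ≤ C * ENNReal.ofReal (‖ξ‖ ^ (-β))) (j : ℕ) :
    ∫⁻ ξ in closedBall 0 (2 ^ (j + 1)) \ closedBall 0 (2 ^ j), g ξ * f ξ ∂μ ≤
      C * c * ENNReal.ofReal (2 ^ γ) * ENNReal.ofReal (2 ^ (γ - β)) ^ j := by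
  set A : Set E := closedBall 0 (2 ^ (j + 1)) \ closedBall 0 (2 ^ j)
  have hgA : ∀ ξ ∈ A, g ξ * f ξ ≤ C * ENNReal.ofReal (((2 : ℝ) ^ j) ^ (-β)) * f ξ := by
    intro ξ ⟨_, hξ⟩
    rw [mem_closedBall_zero_iff, not_le] at hξ
    refine mul_le_mul_left ((hg ξ (one_le_pow₀ one_le_two |>.trans_lt hξ)).trans ?_) _
    exact mul_le_mul_right (ENNReal.ofReal_le_ofReal
      (Real.rpow_le_rpow_of_nonpos (by positivity) hξ.le (neg_nonpos.2 hβ.le))) _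
  calc ∫⁻ ξ in A, g ξ * f ξ ∂μ
      ≤ C * ENNReal.ofReal (((2 : ℝ) ^ j) ^ (-β)) * ∫⁻ ξ in A, f ξ ∂μ := by
        rw [← lintegral_const_mul' _ _ (by finiteness)]
        exact setLIntegral_mono' (measurableSet_closedBall.diff measurableSet_closedBall) hgA
    _ ≤ C * ENNReal.ofReal (((2 : ℝ) ^ j) ^ (-β)) *
          (c * ENNReal.ofReal (((2 : ℝ) ^ (j + 1)) ^ γ)) := by
        gcongr
        exact (lintegral_mono_set Set.sdiff_subset).trans (hf _ (one_le_pow₀ one_le_two))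
    _ = C * c * ENNReal.ofReal (2 ^ γ) * ENNReal.ofReal (2 ^ (γ - β)) ^ j := by
        rw [mul_mul_mul_comm, ← ENNReal.ofReal_mul (by positivity),
          two_pow_rpow_neg_mul_two_pow_succ_rpow, ENNReal.ofReal_mul (by positivity),
          ENNReal.ofReal_pow (by positivity)]
        ring

lemma lintegral_mul_lt_top_of_lintegral_closedBall_le {E : Type*} [SeminormedAddCommGroup E]
    [MeasurableSpace E] [OpensMeasurableSpace E] (μ : Measure E) {f g : E → ℝ≥0∞}
    {β γ : ℝ} {c C M : ℝ≥0∞} (hβ : 0 < β) (hγβ : γ < β) (hc : c ≠ ⊤) (hC : C ≠ ⊤) (hM : M ≠ ⊤)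
    (hf : ∀ R : ℝ, 1 ≤ R → ∫⁻ ξ in closedBall 0 R, f ξ ∂μ ≤ c * ENNReal.ofReal (R ^ γ))
    (hg_ball : ∀ ξ, ‖ξ‖ ≤ 1 → g ξ ≤ M)
    (hg : ∀ ξ, 1 < ‖ξ‖ → g ξ ≤ C * ENNReal.ofReal (‖ξ‖ ^ (-β))) :
    ∫⁻ ξ, g ξ * f ξ ∂μ < ⊤ := by
  let shell (j : ℕ) : Set E := closedBall 0 (2 ^ (j + 1)) \ closedBall 0 (2 ^ j)
  have hcover : Set.univ ⊆ closedBall 0 1 ∪ ⋃ j, shell j := fun ξ _ ↦ by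
    rcases le_or_gt ‖ξ‖ 1 with h | h
    · exact Or.inl (mem_closedBall_zero_iff.2 h)
    · obtain ⟨j, hj⟩ := exists_two_pow_lt_le h
      exact Or.inr (Set.mem_iUnion.2 ⟨j, by simpa [shell] using And.intro hj.2 hj.1⟩)
  have hball : ∫⁻ ξ in closedBall 0 1, g ξ * f ξ ∂μ ≤ M * c :=
    calc ∫⁻ ξ in closedBall 0 1, g ξ * f ξ ∂μ ≤ ∫⁻ ξ in closedBall 0 1, M * f ξ ∂μ :=
          setLIntegral_mono' measurableSet_closedBall fun ξ hξ ↦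
            mul_le_mul_left (hg_ball ξ (mem_closedBall_zero_iff.1 hξ)) _
      _ ≤ M * c := by
          rw [lintegral_const_mul' _ _ hM]
          simpa using mul_le_mul_right (hf 1 le_rfl) M
  have ht : ENNReal.ofReal (2 ^ (γ - β)) < 1 :=
    ENNReal.ofReal_lt_one.2 (Real.rpow_lt_one_of_one_lt_of_neg one_lt_two (by linarith))
  calc ∫⁻ ξ, g ξ * f ξ ∂μ ≤ ∫⁻ ξ in closedBall 0 1 ∪ ⋃ j, shell j, g ξ * f ξ ∂μ := by
        rw [← setLIntegral_univ]
        exact lintegral_mono_set hcover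
    _ ≤ ∫⁻ ξ in closedBall 0 1, g ξ * f ξ ∂μ + ∑' j, ∫⁻ ξ in shell j, g ξ * f ξ ∂μ :=
        (lintegral_union_le _ _ _).trans (add_le_add le_rfl (lintegral_iUnion_le _ _))
    _ ≤ M * c + ∑' j, C * c * ENNReal.ofReal (2 ^ γ) * ENNReal.ofReal (2 ^ (γ - β)) ^ j :=
        add_le_add hball (ENNReal.tsum_le_tsum (setLIntegral_dyadicShell_mul_le μ hβ hC hf hg))
    _ < ⊤ := by
        rw [ENNReal.tsum_mul_left, ENNReal.tsum_geometric]
        have := (tsub_pos_of_lt ht).ne'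
        finiteness

section FourierOfMeasure

variable {n : ℕ}

local notation "E" => EuclideanSpace ℝ (Fin n)

lemma fourierOfMeasure_eq_fourierIntegral (μ : Measure E) :
    fourierOfMeasure μ = VectorFourier.fourierIntegral 𝐞 μ (innerₗ E) fun _ ↦ (1 : ℂ) := by
  ext ξ
  rw [fourierOfMeasure, Real.vector_fourierIntegral_eq_integral_exp_smul]
  congr 1 with z
  rw [smul_eq_mul, mul_one, innerₗ_apply_apply, real_inner_comm]
  push_cast
  ring_nf

@[fun_prop]
lemma continuous_fourierOfMeasure (μ : Measure E) [IsFiniteMeasure μ] :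
    Continuous (fourierOfMeasure μ) := by
  rw [fourierOfMeasure_eq_fourierIntegral]
  exact VectorFourier.fourierIntegral_continuous Real.continuous_fourierChar
    (by simpa using continuous_inner) (integrable_const 1)

lemma enorm_fourierOfMeasure_le (μ : Measure E) (ξ : E) :
    ‖fourierOfMeasure μ ξ‖ₑ ≤ μ Set.univ := by
  have h (z : E) : ‖cexp (-2 * π * I * ⟪ξ, z⟫)‖ₑ = 1 := by
    rw [← enorm_exp_ofReal_mul_I (-2 * π * ⟪ξ, z⟫)]
    push_cast
    ring_nf
  rw [fourierOfMeasure]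
  refine (enorm_integral_le_lintegral_enorm _).trans_eq ?_
  simp_rw [h, lintegral_const, one_mul]

lemma norm_fourierOfMeasure_le (μ : Measure E) [IsFiniteMeasure μ] (ξ : E) :
    ‖fourierOfMeasure μ ξ‖ ≤ μ.real Set.univ := by
  simpa [← ofReal_norm, measureReal_def, ENNReal.ofReal_le_iff_le_toReal]
    using enorm_fourierOfMeasure_le μ ξ

lemma ofReal_norm_fourierOfMeasure_sq (μ : Measure E) [IsFiniteMeasure μ] (ξ : E) :
    ((‖fourierOfMeasure μ ξ‖ ^ 2 : ℝ) : ℂ) =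
      ∫ p : E × E, cexp (-2 * π * I * ⟪p.1 - p.2, ξ⟫) ∂μ.prod μ := by
  have hconj : ∫ y, cexp (2 * π * I * ⟪y, ξ⟫) ∂μ = conj (fourierOfMeasure μ ξ) := by
    rw [fourierOfMeasure, ← integral_conj]
    congr 1 with y
    rw [← Complex.exp_conj, real_inner_comm]
    simp [map_ofNat]
  simp_rw [inner_sub_left, ofReal_sub, mul_sub, sub_eq_add_neg, Complex.exp_add, ← neg_mul,
    neg_neg]
  have hfour : ∫ x, cexp (-2 * π * I * ⟪x, ξ⟫) ∂μ = fourierOfMeasure μ ξ := by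
    simp_rw [fourierOfMeasure, real_inner_comm _ ξ]
  rw [integral_prod_mul (fun x ↦ cexp (-2 * π * I * ⟪x, ξ⟫))
    (fun y ↦ cexp (2 * π * I * ⟪y, ξ⟫)), hconj, hfour, Complex.mul_conj,
    Complex.normSq_eq_norm_sq]

lemma integral_gaussian_mul_norm_fourierOfMeasure_sq (ν : Measure E) [IsFiniteMeasure ν]
    {a : ℝ} (ha : 0 < a) :
    ∫ ξ : E, rexp (-a * ‖ξ‖ ^ 2) * ‖fourierOfMeasure ν ξ‖ ^ 2 =
      (π / a) ^ (n / 2 : ℝ) * ∫ p : E × E, rexp (-π ^ 2 * ‖p.1 - p.2‖ ^ 2 / a) ∂ν.prod ν := by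
  have ha' : 0 < (a : ℂ).re := by simpa using ha
  let Φ : E × (E × E) → ℂ := fun q ↦
    cexp (-a * ‖q.1‖ ^ 2 + -2 * π * I * ⟪q.2.1 - q.2.2, q.1⟫)
  have hΦ : Integrable Φ (volume.prod (ν.prod ν)) := by
    refine ((integrable_exp_neg_mul_sq_norm ha).comp_fst (ν.prod ν)).mono' (by fun_prop)
      (ae_of_all _ fun q ↦ ?_)
    simp [Φ, Complex.norm_exp, ← ofReal_pow]
  have hgauss (p : E × E) : ∫ ξ, Φ (ξ, p) =
      ((π / a) ^ (n / 2 : ℝ) : ℝ) * ((rexp (-π ^ 2 * ‖p.1 - p.2‖ ^ 2 / a) : ℝ) : ℂ) := by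
    simp only [Φ]
    rw [GaussianFourier.integral_cexp_neg_mul_sq_norm_add ha', finrank_euclideanSpace_fin,
      ofReal_cpow (by positivity)]
    push_cast
    ring_nf
    simp
  apply ofReal_injective
  calc ((∫ ξ : E, rexp (-a * ‖ξ‖ ^ 2) * ‖fourierOfMeasure ν ξ‖ ^ 2 : ℝ) : ℂ)
      = ∫ ξ : E, ∫ p, Φ (ξ, p) ∂ν.prod ν := by
        rw [← integral_complex_ofReal]
        congr 1 with ξ
        rw [ofReal_mul, ofReal_norm_fourierOfMeasure_sq, ← integral_const_mul]
        simp only [Φ, Complex.exp_add, ofReal_exp]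
        push_cast
        rfl
    _ = ∫ p, (∫ ξ : E, Φ (ξ, p)) ∂ν.prod ν := integral_integral_swap hΦ
    _ = _ := by
        simp_rw [hgauss, integral_const_mul, integral_complex_ofReal]
        push_cast
        rfl

lemma lintegral_gaussian_mul_enorm_fourierOfMeasure_sq (ν : Measure E) [IsFiniteMeasure ν]
    {a : ℝ} (ha : 0 < a) :
    ∫⁻ ξ : E, ENNReal.ofReal (rexp (-a * ‖ξ‖ ^ 2)) * ‖fourierOfMeasure ν ξ‖ₑ ^ 2 =
      ENNReal.ofReal ((π / a) ^ (n / 2 : ℝ)) *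
        ∫⁻ p : E × E, ENNReal.ofReal (rexp (-π ^ 2 * ‖p.1 - p.2‖ ^ 2 / a)) ∂ν.prod ν := by
  have hint : Integrable fun ξ : E ↦ rexp (-a * ‖ξ‖ ^ 2) * ‖fourierOfMeasure ν ξ‖ ^ 2 := by
    refine ((integrable_exp_neg_mul_sq_norm ha).mul_const (ν.real Set.univ ^ 2)).mono'
      (by fun_prop : Continuous _).aestronglyMeasurable (ae_of_all _ fun ξ ↦ ?_)
    rw [norm_of_nonneg (by positivity)]
    gcongr
    exact norm_fourierOfMeasure_le ν ξ
  have hkernel :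
      Integrable (fun p : E × E ↦ rexp (-π ^ 2 * ‖p.1 - p.2‖ ^ 2 / a)) (ν.prod ν) := by
    refine (integrable_const 1).mono' (by fun_prop : Continuous _).aestronglyMeasurable
      (ae_of_all _ fun p ↦ ?_)
    rw [norm_of_nonneg (exp_pos _).le, exp_le_one_iff, neg_mul, neg_div, neg_nonpos]
    positivity
  simp_rw [← ofReal_norm, ← ENNReal.ofReal_pow (norm_nonneg _),
    ← ENNReal.ofReal_mul (exp_pos _).le]
  rw [← ofReal_integral_eq_lintegral_ofReal hint (ae_of_all _ fun _ ↦ by positivity),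
    ← ofReal_integral_eq_lintegral_ofReal hkernel (ae_of_all _ fun _ ↦ by positivity),
    ← ENNReal.ofReal_mul (by positivity), integral_gaussian_mul_norm_fourierOfMeasure_sq ν ha]

lemma lintegral_closedBall_enorm_fourierOfMeasure_sq_le (ν : Measure E) [IsFiniteMeasure ν]
    {s : ℝ} (hν : ∀ (x : E) (ρ : ℝ), 0 < ρ → ν (closedBall x ρ) ≤ ENNReal.ofReal (ρ ^ s))
    {R : ℝ} (hR : 0 < R) :
    ∫⁻ ξ in closedBall (0 : E) R, ‖fourierOfMeasure ν ξ‖ₑ ^ 2 ≤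
      ENNReal.ofReal (rexp π) * ν Set.univ * gaussianShellSum s *
        ENNReal.ofReal (R ^ ((n : ℝ) - s)) := by
  have ha : 0 < π / R ^ 2 := by positivity
  have hscale : (π / (π / R ^ 2)) ^ (n / 2 : ℝ) = R ^ (n : ℝ) := by
    rw [div_div_cancel₀ Real.pi_ne_zero, ← Real.rpow_natCast R 2, ← Real.rpow_mul hR.le]
    congr 1
    push_cast
    ring
  have hkernel (p : E × E) :
      -π ^ 2 * ‖p.1 - p.2‖ ^ 2 / (π / R ^ 2) = -(π * R ^ 2) * dist p.1 p.2 ^ 2 := by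
    rw [dist_eq_norm]
    field_simp
  calc ∫⁻ ξ in closedBall (0 : E) R, ‖fourierOfMeasure ν ξ‖ₑ ^ 2
      ≤ ENNReal.ofReal (rexp π) * ∫⁻ ξ : E,
          ENNReal.ofReal (rexp (-(π / R ^ 2) * ‖ξ‖ ^ 2)) * ‖fourierOfMeasure ν ξ‖ₑ ^ 2 :=
        setLIntegral_closedBall_le_lintegral_gaussian_mul volume _ hR
    _ = ENNReal.ofReal (rexp π) * (ENNReal.ofReal (R ^ (n : ℝ)) *
          ∫⁻ x, ∫⁻ y, ENNReal.ofReal (rexp (-(π * R ^ 2) * dist x y ^ 2)) ∂ν ∂ν) := by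
        rw [lintegral_gaussian_mul_enorm_fourierOfMeasure_sq ν ha, hscale]
        simp_rw [hkernel]
        rw [lintegral_prod _ (by fun_prop : Measurable _).aemeasurable]
    _ ≤ ENNReal.ofReal (rexp π) * (ENNReal.ofReal (R ^ (n : ℝ)) *
          ∫⁻ _, ENNReal.ofReal (R ^ (-s)) * gaussianShellSum s ∂ν) := by
        gcongr with x
        exact lintegral_gaussian_dist_le ν hν hR x
    _ = _ := by
        rw [lintegral_const, sub_eq_add_neg, Real.rpow_add hR,
          ENNReal.ofReal_mul (by positivity)]
        ring

lemma sphAvg_le (μ : Measure E) (r : ℝ) :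
    sphAvg μ r ≤ (volume : Measure E).toSphere Set.univ * μ Set.univ ^ 2 :=
  calc sphAvg μ r
      ≤ ∫⁻ _ : sphere (0 : E) 1, μ Set.univ ^ 2 ∂(volume : Measure E).toSphere :=
        lintegral_mono fun _ ↦ pow_le_pow_left' (enorm_fourierOfMeasure_le μ _) 2
    _ = _ := by rw [lintegral_const, mul_comm]

end FourierOfMeasure

theorem stmt13_general {n : ℕ} (β s : ℝ) (hβ : 0 < β) (hs : (n : ℝ) - β < s)
    (μ ν : Measure (EuclideanSpace ℝ (Fin n))) [IsFiniteMeasure μ] [IsFiniteMeasure ν]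
    (C : ℝ≥0∞) (hC : C ≠ ⊤)
    (hσ : ∀ r : ℝ, 1 < r → sphAvg μ r ≤ C * ENNReal.ofReal (r ^ (-β)))
    (hfr : ∀ (x : EuclideanSpace ℝ (Fin n)) (ρ : ℝ), 0 < ρ →
      ν (closedBall x ρ) ≤ ENNReal.ofReal (ρ ^ s)) :
    ∫⁻ ξ, sphAvg μ ‖ξ‖ * (‖fourierOfMeasure ν ξ‖₊ : ℝ≥0∞) ^ 2 < ⊤ := by
  have hS := gaussianShellSum_ne_top s
  exact lintegral_mul_lt_top_of_lintegral_closedBall_le volume hβ (by linarith) (by finiteness)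
    hC (by finiteness)
    (fun R hR ↦ lintegral_closedBall_enorm_fourierOfMeasure_sq_le ν hfr (by linarith))
    (fun ξ _ ↦ sphAvg_le μ ‖ξ‖) (fun ξ hξ ↦ hσ ‖ξ‖ hξ)

/-- If `μ` has compact support and `σ(μ)(r) ≤ C r^{−β}` for `r > 1`, and `ν` is supported in
the unit ball with `ν(B(x,ρ)) ≤ ρ^s` where `s > n − β`, then
`∫ σ(μ)(|ξ|)|ν̂(ξ)|² dξ < ∞`. -/
theorem stmt13 {n : ℕ} (β s : ℝ) (hβ : 0 < β) (hs : (n : ℝ) - β < s)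
    (μ ν : Measure (EuclideanSpace ℝ (Fin n))) [IsFiniteMeasure μ] [IsFiniteMeasure ν]
    (K : Set (EuclideanSpace ℝ (Fin n))) (hK : IsCompact K) (hμK : μ Kᶜ = 0)
    (C : ℝ≥0∞) (hC : C ≠ ⊤)
    (hσ : ∀ r : ℝ, 1 < r → sphAvg μ r ≤ C * ENNReal.ofReal (r ^ (-β)))
    (hνs : ν (closedBall (0 : EuclideanSpace ℝ (Fin n)) 1)ᶜ = 0)
    (hfr : ∀ (x : EuclideanSpace ℝ (Fin n)) (ρ : ℝ), 0 < ρ →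
      ν (closedBall x ρ) ≤ ENNReal.ofReal (ρ ^ s)) :
    ∫⁻ ξ, sphAvg μ ‖ξ‖ * (‖fourierOfMeasure ν ξ‖₊ : ℝ≥0∞) ^ 2 < ⊤ :=
  stmt13_general β s hβ hs μ ν C hC hσ hfr
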